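/- arXiv:2308.04882 — 5 statements merged into one kernel-verified Lean document; each statement's English description precedes it below -/
import Mathlib

section
/- For each positive integer k, the graph G_k (3k pentagons A_i = (a_i, b_i, c_i, d_i, e_i, a_i) joined by edges b_i e_{i+1}) is 1/2-hyperbolic: for any four vertices u, v, w, x, the two larger of the three sums d(u,v)+d(w,x), d(u,w)+d(v,x), d(u,x)+d(v,w) differ by at most 1. -/
open SimpleGraph

variable {V : Type*}

/-- `p` restricted to `{0,…,k}` is an isometric path of length `k` in `G`. -/
def IsIsomPath (G : SimpleGraph V) (p : ℕ → V) (k : ℕ) : Prop :=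
  ∀ i j, i ≤ k → j ≤ k → G.dist (p i) (p j) = max i j - min i j

def pathVerts (p : ℕ → V) (k : ℕ) : Set V := {x | ∃ i, i ≤ k ∧ p i = x}

noncomputable def ecc (G : SimpleGraph V) [Fintype V] (v : V) : ℕ :=
  Finset.univ.sup (fun u => G.dist v u)

noncomputable def grad (G : SimpleGraph V) [Fintype V] : ℕ :=
  sInf (Set.range (ecc G))

noncomputable def gdiam (G : SimpleGraph V) [Fintype V] : ℕ :=
  Finset.univ.sup (fun v => ecc G v)

def IsMultipacking (G : SimpleGraph V) [Fintype V] (M : Set V) : Prop :=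
  ∀ v : V, ∀ r : ℕ, 1 ≤ r → r ≤ gdiam G →
    (M ∩ {u | G.dist v u ≤ r}).ncard ≤ r

noncomputable def mp (G : SimpleGraph V) [Fintype V] : ℕ :=
  sSup {n | ∃ M : Set V, IsMultipacking G M ∧ M.ncard = n}

def IsDomBroadcast (G : SimpleGraph V) [Fintype V] (f : V → ℕ) : Prop :=
  (∀ v, f v ≤ gdiam G) ∧ ∀ u : V, ∃ v : V, 1 ≤ f v ∧ G.dist u v ≤ f v

noncomputable def gammaB (G : SimpleGraph V) [Fintype V] : ℕ :=
  sInf {n | ∃ f : V → ℕ, IsDomBroadcast G f ∧ ∑ v, f v = n}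

noncomputable def gammaDom (G : SimpleGraph V) [Fintype V] : ℕ :=
  sInf {n | ∃ D : Finset V, (∀ u : V, ∃ v ∈ D, u = v ∨ G.Adj u v) ∧ D.card = n}

def IsFracMP (G : SimpleGraph V) [Fintype V] (w : V → ℝ) : Prop :=
  (∀ v, 0 ≤ w v) ∧ ∀ v : V, ∀ r : ℕ, 1 ≤ r →
    (∑ u ∈ Finset.univ.filter (fun u => G.dist v u ≤ r), w u) ≤ r

noncomputable def mpf (G : SimpleGraph V) [Fintype V] : ℝ :=
  sSup {s | ∃ w : V → ℝ, IsFracMP G w ∧ ∑ v, w v = s}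

/-- A cactus: connected and every edge lies on at most one cycle. -/
def IsCactus (G : SimpleGraph V) : Prop :=
  G.Connected ∧ ∀ (u v : V) (c₁ : G.Walk u u) (c₂ : G.Walk v v),
    c₁.IsCycle → c₂.IsCycle → ∀ e, e ∈ c₁.edges → e ∈ c₂.edges →
      (∀ e', e' ∈ c₁.edges ↔ e' ∈ c₂.edges)

def pentRel (k : ℕ) (x y : Fin (3*k) × Fin 5) : Prop :=
  (x.1 = y.1 ∧ (x.2.val + 1) % 5 = y.2.val) ∨
  (x.1.val + 1 = y.1.val ∧ x.2.val = 1 ∧ y.2.val = 4)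

def Gk (k : ℕ) : SimpleGraph (Fin (3*k) × Fin 5) := SimpleGraph.fromRel (pentRel k)

/-! ### Auxiliary development -/

/-- cyclic distance on the pentagon -/
def d5n (a b : ℕ) : ℕ := min (max a b - min a b) (5 - (max a b - min a b))

/-- the distance formula for the pentagonal chain -/
def Dfun (i a j b : ℕ) : ℕ :=
  if i = j then d5n a b
  else if i < j then 3*(j-i) - 2 + d5n a 1 + d5n b 4
  else 3*(i-j) - 2 + d5n a 4 + d5n b 1

lemma Dfun_same {i j : ℕ} (h : i = j) (a b : ℕ) : Dfun i a j b = d5n a b := by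
  unfold Dfun; rw [if_pos h]

lemma Dfun_lt {i j : ℕ} (h : i < j) (a b : ℕ) :
    Dfun i a j b = 3*(j-i) - 2 + d5n a 1 + d5n b 4 := by
  unfold Dfun; rw [if_neg (Nat.ne_of_lt h), if_pos h]

lemma Dfun_gt {i j : ℕ} (h : j < i) (a b : ℕ) :
    Dfun i a j b = 3*(i-j) - 2 + d5n a 4 + d5n b 1 := by
  unfold Dfun; rw [if_neg (Nat.ne_of_gt h), if_neg (Nat.lt_asymm h)]

lemma d5n_comm (a b : ℕ) : d5n a b = d5n b a := by
  unfold d5n; omega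

lemma Dfun_symm (i a j b : ℕ) : Dfun i a j b = Dfun j b i a := by
  rcases Nat.lt_trichotomy i j with h|h|h
  · rw [Dfun_lt h, Dfun_gt h]; omega
  · rw [Dfun_same h, Dfun_same h.symm, d5n_comm]
  · rw [Dfun_gt h, Dfun_lt h]; omega

lemma Dchar (i a j b : ℕ) :
    (i = j ∧ Dfun i a j b = d5n a b) ∨
    (i < j ∧ Dfun i a j b = 3*(j-i) - 2 + d5n a 1 + d5n b 4) ∨
    (j < i ∧ Dfun i a j b = 3*(i-j) - 2 + d5n a 4 + d5n b 1) := by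
  rcases Nat.lt_trichotomy i j with h|h|h
  · exact Or.inr (Or.inl ⟨h, Dfun_lt h a b⟩)
  · exact Or.inl ⟨h, Dfun_same h a b⟩
  · exact Or.inr (Or.inr ⟨h, Dfun_gt h a b⟩)

/-! ### decidable pentagon facts -/

lemma sing (a : Fin 5) :
    d5n a.val a.val = 0 ∧ d5n a.val 1 ≤ 2 ∧ d5n a.val 4 ≤ 2 ∧
    2 ≤ d5n a.val 1 + d5n a.val 4 ∧ d5n a.val 1 + d5n a.val 4 ≤ 3 ∧
    d5n 1 a.val = d5n a.val 1 ∧ d5n 4 a.val = d5n a.val 4 := by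
  revert a; decide

lemma pairB (a b : Fin 5) :
    d5n a.val b.val ≤ 2 ∧
    d5n a.val b.val ≤ d5n a.val 1 + d5n b.val 1 ∧
    d5n a.val b.val ≤ d5n a.val 4 + d5n b.val 4 ∧
    d5n a.val 1 ≤ d5n a.val b.val + d5n b.val 1 ∧
    d5n b.val 1 ≤ d5n a.val b.val + d5n a.val 1 ∧
    d5n a.val 4 ≤ d5n a.val b.val + d5n b.val 4 ∧
    d5n b.val 4 ≤ d5n a.val b.val + d5n a.val 4 ∧
    2 ≤ d5n a.val 1 + d5n a.val b.val + d5n b.val 4 ∧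
    2 ≤ d5n b.val 1 + d5n a.val b.val + d5n a.val 4 := by
  revert a b; decide

lemma quad4pt (a b c d : Fin 5) :
    d5n a.val b.val + d5n c.val d.val ≤
      max (d5n a.val c.val + d5n b.val d.val) (d5n a.val d.val + d5n b.val c.val) + 1 ∧
    d5n a.val c.val + d5n b.val d.val ≤
      max (d5n a.val b.val + d5n c.val d.val) (d5n a.val d.val + d5n b.val c.val) + 1 ∧
    d5n a.val d.val + d5n b.val c.val ≤
      max (d5n a.val b.val + d5n c.val d.val) (d5n a.val c.val + d5n b.val d.val) + 1 := by
  revert a b c d; decide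

lemma adjF : ∀ a b c : Fin 5, (a.val + 1) % 5 = b.val →
    d5n a.val c.val ≤ d5n b.val c.val + 1 ∧ d5n b.val c.val ≤ d5n a.val c.val + 1 ∧
    d5n a.val 1 ≤ d5n b.val 1 + 1 ∧ d5n b.val 1 ≤ d5n a.val 1 + 1 ∧
    d5n a.val 4 ≤ d5n b.val 4 + 1 ∧ d5n b.val 4 ≤ d5n a.val 4 + 1 := by
  decide

set_option maxHeartbeats 1000000 in
lemma key000 (i1 i2 i3 i4 : ℕ) (a1 a2 a3 a4 : Fin 5) (si1i2 : i1 = i2) (si2i3 : i2 = i3) (si3i4 : i3 = i4) :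
    Dfun i1 a1.val i2 a2.val + Dfun i3 a3.val i4 a4.val ≤
      max (Dfun i1 a1.val i3 a3.val + Dfun i2 a2.val i4 a4.val)
          (Dfun i1 a1.val i4 a4.val + Dfun i2 a2.val i3 a3.val) + 1 ∧
    Dfun i1 a1.val i3 a3.val + Dfun i2 a2.val i4 a4.val ≤
      max (Dfun i1 a1.val i2 a2.val + Dfun i3 a3.val i4 a4.val)
          (Dfun i1 a1.val i4 a4.val + Dfun i2 a2.val i3 a3.val) + 1 ∧
    Dfun i1 a1.val i4 a4.val + Dfun i2 a2.val i3 a3.val ≤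
      max (Dfun i1 a1.val i2 a2.val + Dfun i3 a3.val i4 a4.val)
          (Dfun i1 a1.val i3 a3.val + Dfun i2 a2.val i4 a4.val) + 1 := by
  rw [Dfun_same (show i1 = i2 by omega) (a1.val) (a2.val), Dfun_same (show i2 = i3 by omega) (a2.val) (a3.val), Dfun_same (show i3 = i4 by omega) (a3.val) (a4.val), Dfun_same (show i1 = i3 by omega) (a1.val) (a3.val), Dfun_same (show i2 = i4 by omega) (a2.val) (a4.val), Dfun_same (show i1 = i4 by omega) (a1.val) (a4.val)]
  exact quad4pt a1 a2 a3 a4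

set_option maxHeartbeats 1000000 in
lemma key001 (i1 i2 i3 i4 : ℕ) (a1 a2 a3 a4 : Fin 5) (si1i2 : i1 = i2) (si2i3 : i2 = i3) (si3i4 : i3 < i4) :
    Dfun i1 a1.val i2 a2.val + Dfun i3 a3.val i4 a4.val ≤
      max (Dfun i1 a1.val i3 a3.val + Dfun i2 a2.val i4 a4.val)
          (Dfun i1 a1.val i4 a4.val + Dfun i2 a2.val i3 a3.val) + 1 ∧
    Dfun i1 a1.val i3 a3.val + Dfun i2 a2.val i4 a4.val ≤
      max (Dfun i1 a1.val i2 a2.val + Dfun i3 a3.val i4 a4.val)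
          (Dfun i1 a1.val i4 a4.val + Dfun i2 a2.val i3 a3.val) + 1 ∧
    Dfun i1 a1.val i4 a4.val + Dfun i2 a2.val i3 a3.val ≤
      max (Dfun i1 a1.val i2 a2.val + Dfun i3 a3.val i4 a4.val)
          (Dfun i1 a1.val i3 a3.val + Dfun i2 a2.val i4 a4.val) + 1 := by
  rw [Dfun_same (show i1 = i2 by omega) (a1.val) (a2.val), Dfun_same (show i2 = i3 by omega) (a2.val) (a3.val), Dfun_lt (show i3 < i4 by omega) (a3.val) (a4.val), Dfun_same (show i1 = i3 by omega) (a1.val) (a3.val), Dfun_lt (show i2 < i4 by omega) (a2.val) (a4.val), Dfun_lt (show i1 < i4 by omega) (a1.val) (a4.val)]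
  have e1 : ((1 : Fin 5) : ℕ) = 1 := rfl
  have e4 : ((4 : Fin 5) : ℕ) = 4 := rfl
  have e14 : d5n 1 4 = 2 := rfl
  have e11 : d5n 1 1 = 0 := rfl
  have e44 : d5n 4 4 = 0 := rfl
  have e41 : d5n 4 1 = 2 := rfl
  have s1 := sing a1
  have s2 := sing a2
  have s3 := sing a3
  have s4 := sing a4
  have q := quad4pt a1 a2 a3 1
  simp only [e1, e4, e14, e11, e44, e41] at q
  omega

set_option maxHeartbeats 1000000 in
lemma key010 (i1 i2 i3 i4 : ℕ) (a1 a2 a3 a4 : Fin 5) (si1i2 : i1 = i2) (si2i3 : i2 < i3) (si3i4 : i3 = i4) :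
    Dfun i1 a1.val i2 a2.val + Dfun i3 a3.val i4 a4.val ≤
      max (Dfun i1 a1.val i3 a3.val + Dfun i2 a2.val i4 a4.val)
          (Dfun i1 a1.val i4 a4.val + Dfun i2 a2.val i3 a3.val) + 1 ∧
    Dfun i1 a1.val i3 a3.val + Dfun i2 a2.val i4 a4.val ≤
      max (Dfun i1 a1.val i2 a2.val + Dfun i3 a3.val i4 a4.val)
          (Dfun i1 a1.val i4 a4.val + Dfun i2 a2.val i3 a3.val) + 1 ∧
    Dfun i1 a1.val i4 a4.val + Dfun i2 a2.val i3 a3.val ≤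
      max (Dfun i1 a1.val i2 a2.val + Dfun i3 a3.val i4 a4.val)
          (Dfun i1 a1.val i3 a3.val + Dfun i2 a2.val i4 a4.val) + 1 := by
  rw [Dfun_same (show i1 = i2 by omega) (a1.val) (a2.val), Dfun_lt (show i2 < i3 by omega) (a2.val) (a3.val), Dfun_same (show i3 = i4 by omega) (a3.val) (a4.val), Dfun_lt (show i1 < i3 by omega) (a1.val) (a3.val), Dfun_lt (show i2 < i4 by omega) (a2.val) (a4.val), Dfun_lt (show i1 < i4 by omega) (a1.val) (a4.val)]
  have s1 := sing a1
  have s2 := sing a2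
  have s3 := sing a3
  have s4 := sing a4
  have p12 := pairB a1 a2
  have p34 := pairB a3 a4
  omega

set_option maxHeartbeats 1000000 in
lemma key011 (i1 i2 i3 i4 : ℕ) (a1 a2 a3 a4 : Fin 5) (si1i2 : i1 = i2) (si2i3 : i2 < i3) (si3i4 : i3 < i4) :
    Dfun i1 a1.val i2 a2.val + Dfun i3 a3.val i4 a4.val ≤
      max (Dfun i1 a1.val i3 a3.val + Dfun i2 a2.val i4 a4.val)
          (Dfun i1 a1.val i4 a4.val + Dfun i2 a2.val i3 a3.val) + 1 ∧
    Dfun i1 a1.val i3 a3.val + Dfun i2 a2.val i4 a4.val ≤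
      max (Dfun i1 a1.val i2 a2.val + Dfun i3 a3.val i4 a4.val)
          (Dfun i1 a1.val i4 a4.val + Dfun i2 a2.val i3 a3.val) + 1 ∧
    Dfun i1 a1.val i4 a4.val + Dfun i2 a2.val i3 a3.val ≤
      max (Dfun i1 a1.val i2 a2.val + Dfun i3 a3.val i4 a4.val)
          (Dfun i1 a1.val i3 a3.val + Dfun i2 a2.val i4 a4.val) + 1 := by
  rw [Dfun_same (show i1 = i2 by omega) (a1.val) (a2.val), Dfun_lt (show i2 < i3 by omega) (a2.val) (a3.val), Dfun_lt (show i3 < i4 by omega) (a3.val) (a4.val), Dfun_lt (show i1 < i3 by omega) (a1.val) (a3.val), Dfun_lt (show i2 < i4 by omega) (a2.val) (a4.val), Dfun_lt (show i1 < i4 by omega) (a1.val) (a4.val)]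
  have s1 := sing a1
  have s2 := sing a2
  have s3 := sing a3
  have s4 := sing a4
  have p12 := pairB a1 a2
  omega

set_option maxHeartbeats 1000000 in
lemma key100 (i1 i2 i3 i4 : ℕ) (a1 a2 a3 a4 : Fin 5) (si1i2 : i1 < i2) (si2i3 : i2 = i3) (si3i4 : i3 = i4) :
    Dfun i1 a1.val i2 a2.val + Dfun i3 a3.val i4 a4.val ≤
      max (Dfun i1 a1.val i3 a3.val + Dfun i2 a2.val i4 a4.val)
          (Dfun i1 a1.val i4 a4.val + Dfun i2 a2.val i3 a3.val) + 1 ∧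
    Dfun i1 a1.val i3 a3.val + Dfun i2 a2.val i4 a4.val ≤
      max (Dfun i1 a1.val i2 a2.val + Dfun i3 a3.val i4 a4.val)
          (Dfun i1 a1.val i4 a4.val + Dfun i2 a2.val i3 a3.val) + 1 ∧
    Dfun i1 a1.val i4 a4.val + Dfun i2 a2.val i3 a3.val ≤
      max (Dfun i1 a1.val i2 a2.val + Dfun i3 a3.val i4 a4.val)
          (Dfun i1 a1.val i3 a3.val + Dfun i2 a2.val i4 a4.val) + 1 := by
  rw [Dfun_lt (show i1 < i2 by omega) (a1.val) (a2.val), Dfun_same (show i2 = i3 by omega) (a2.val) (a3.val), Dfun_same (show i3 = i4 by omega) (a3.val) (a4.val), Dfun_lt (show i1 < i3 by omega) (a1.val) (a3.val), Dfun_same (show i2 = i4 by omega) (a2.val) (a4.val), Dfun_lt (show i1 < i4 by omega) (a1.val) (a4.val)]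
  have e1 : ((1 : Fin 5) : ℕ) = 1 := rfl
  have e4 : ((4 : Fin 5) : ℕ) = 4 := rfl
  have e14 : d5n 1 4 = 2 := rfl
  have e11 : d5n 1 1 = 0 := rfl
  have e44 : d5n 4 4 = 0 := rfl
  have e41 : d5n 4 1 = 2 := rfl
  have s1 := sing a1
  have s2 := sing a2
  have s3 := sing a3
  have s4 := sing a4
  have q := quad4pt a2 a3 a4 4
  simp only [e1, e4, e14, e11, e44, e41] at q
  omega

set_option maxHeartbeats 1000000 in
lemma key101 (i1 i2 i3 i4 : ℕ) (a1 a2 a3 a4 : Fin 5) (si1i2 : i1 < i2) (si2i3 : i2 = i3) (si3i4 : i3 < i4) :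
    Dfun i1 a1.val i2 a2.val + Dfun i3 a3.val i4 a4.val ≤
      max (Dfun i1 a1.val i3 a3.val + Dfun i2 a2.val i4 a4.val)
          (Dfun i1 a1.val i4 a4.val + Dfun i2 a2.val i3 a3.val) + 1 ∧
    Dfun i1 a1.val i3 a3.val + Dfun i2 a2.val i4 a4.val ≤
      max (Dfun i1 a1.val i2 a2.val + Dfun i3 a3.val i4 a4.val)
          (Dfun i1 a1.val i4 a4.val + Dfun i2 a2.val i3 a3.val) + 1 ∧
    Dfun i1 a1.val i4 a4.val + Dfun i2 a2.val i3 a3.val ≤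
      max (Dfun i1 a1.val i2 a2.val + Dfun i3 a3.val i4 a4.val)
          (Dfun i1 a1.val i3 a3.val + Dfun i2 a2.val i4 a4.val) + 1 := by
  rw [Dfun_lt (show i1 < i2 by omega) (a1.val) (a2.val), Dfun_same (show i2 = i3 by omega) (a2.val) (a3.val), Dfun_lt (show i3 < i4 by omega) (a3.val) (a4.val), Dfun_lt (show i1 < i3 by omega) (a1.val) (a3.val), Dfun_lt (show i2 < i4 by omega) (a2.val) (a4.val), Dfun_lt (show i1 < i4 by omega) (a1.val) (a4.val)]
  have e1 : ((1 : Fin 5) : ℕ) = 1 := rfl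
  have e4 : ((4 : Fin 5) : ℕ) = 4 := rfl
  have e14 : d5n 1 4 = 2 := rfl
  have e11 : d5n 1 1 = 0 := rfl
  have e44 : d5n 4 4 = 0 := rfl
  have e41 : d5n 4 1 = 2 := rfl
  have s1 := sing a1
  have s2 := sing a2
  have s3 := sing a3
  have s4 := sing a4
  have p23 := pairB a2 a3
  have q := quad4pt a2 a3 1 4
  simp only [e1, e4, e14, e11, e44, e41] at q
  omega

set_option maxHeartbeats 1000000 in
lemma key110 (i1 i2 i3 i4 : ℕ) (a1 a2 a3 a4 : Fin 5) (si1i2 : i1 < i2) (si2i3 : i2 < i3) (si3i4 : i3 = i4) :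
    Dfun i1 a1.val i2 a2.val + Dfun i3 a3.val i4 a4.val ≤
      max (Dfun i1 a1.val i3 a3.val + Dfun i2 a2.val i4 a4.val)
          (Dfun i1 a1.val i4 a4.val + Dfun i2 a2.val i3 a3.val) + 1 ∧
    Dfun i1 a1.val i3 a3.val + Dfun i2 a2.val i4 a4.val ≤
      max (Dfun i1 a1.val i2 a2.val + Dfun i3 a3.val i4 a4.val)
          (Dfun i1 a1.val i4 a4.val + Dfun i2 a2.val i3 a3.val) + 1 ∧
    Dfun i1 a1.val i4 a4.val + Dfun i2 a2.val i3 a3.val ≤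
      max (Dfun i1 a1.val i2 a2.val + Dfun i3 a3.val i4 a4.val)
          (Dfun i1 a1.val i3 a3.val + Dfun i2 a2.val i4 a4.val) + 1 := by
  rw [Dfun_lt (show i1 < i2 by omega) (a1.val) (a2.val), Dfun_lt (show i2 < i3 by omega) (a2.val) (a3.val), Dfun_same (show i3 = i4 by omega) (a3.val) (a4.val), Dfun_lt (show i1 < i3 by omega) (a1.val) (a3.val), Dfun_lt (show i2 < i4 by omega) (a2.val) (a4.val), Dfun_lt (show i1 < i4 by omega) (a1.val) (a4.val)]
  have s1 := sing a1
  have s2 := sing a2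
  have s3 := sing a3
  have s4 := sing a4
  have p34 := pairB a3 a4
  omega

set_option maxHeartbeats 1000000 in
lemma key111 (i1 i2 i3 i4 : ℕ) (a1 a2 a3 a4 : Fin 5) (si1i2 : i1 < i2) (si2i3 : i2 < i3) (si3i4 : i3 < i4) :
    Dfun i1 a1.val i2 a2.val + Dfun i3 a3.val i4 a4.val ≤
      max (Dfun i1 a1.val i3 a3.val + Dfun i2 a2.val i4 a4.val)
          (Dfun i1 a1.val i4 a4.val + Dfun i2 a2.val i3 a3.val) + 1 ∧
    Dfun i1 a1.val i3 a3.val + Dfun i2 a2.val i4 a4.val ≤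
      max (Dfun i1 a1.val i2 a2.val + Dfun i3 a3.val i4 a4.val)
          (Dfun i1 a1.val i4 a4.val + Dfun i2 a2.val i3 a3.val) + 1 ∧
    Dfun i1 a1.val i4 a4.val + Dfun i2 a2.val i3 a3.val ≤
      max (Dfun i1 a1.val i2 a2.val + Dfun i3 a3.val i4 a4.val)
          (Dfun i1 a1.val i3 a3.val + Dfun i2 a2.val i4 a4.val) + 1 := by
  rw [Dfun_lt (show i1 < i2 by omega) (a1.val) (a2.val), Dfun_lt (show i2 < i3 by omega) (a2.val) (a3.val), Dfun_lt (show i3 < i4 by omega) (a3.val) (a4.val), Dfun_lt (show i1 < i3 by omega) (a1.val) (a3.val), Dfun_lt (show i2 < i4 by omega) (a2.val) (a4.val), Dfun_lt (show i1 < i4 by omega) (a1.val) (a4.val)]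
  have s1 := sing a1
  have s2 := sing a2
  have s3 := sing a3
  have s4 := sing a4
  omega

lemma keyQ (i1 i2 i3 i4 : ℕ) (a1 a2 a3 a4 : Fin 5)
    (s12 : i1 ≤ i2) (s23 : i2 ≤ i3) (s34 : i3 ≤ i4) :
    Dfun i1 a1.val i2 a2.val + Dfun i3 a3.val i4 a4.val ≤
      max (Dfun i1 a1.val i3 a3.val + Dfun i2 a2.val i4 a4.val)
          (Dfun i1 a1.val i4 a4.val + Dfun i2 a2.val i3 a3.val) + 1 ∧
    Dfun i1 a1.val i3 a3.val + Dfun i2 a2.val i4 a4.val ≤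
      max (Dfun i1 a1.val i2 a2.val + Dfun i3 a3.val i4 a4.val)
          (Dfun i1 a1.val i4 a4.val + Dfun i2 a2.val i3 a3.val) + 1 ∧
    Dfun i1 a1.val i4 a4.val + Dfun i2 a2.val i3 a3.val ≤
      max (Dfun i1 a1.val i2 a2.val + Dfun i3 a3.val i4 a4.val)
          (Dfun i1 a1.val i3 a3.val + Dfun i2 a2.val i4 a4.val) + 1 := by
  rcases eq_or_lt_of_le s12 with h1 | h1 <;>
  rcases eq_or_lt_of_le s23 with h2 | h2 <;>
  rcases eq_or_lt_of_le s34 with h3 | h3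
  · exact key000 i1 i2 i3 i4 a1 a2 a3 a4 h1 h2 h3
  · exact key001 i1 i2 i3 i4 a1 a2 a3 a4 h1 h2 h3
  · exact key010 i1 i2 i3 i4 a1 a2 a3 a4 h1 h2 h3
  · exact key011 i1 i2 i3 i4 a1 a2 a3 a4 h1 h2 h3
  · exact key100 i1 i2 i3 i4 a1 a2 a3 a4 h1 h2 h3
  · exact key101 i1 i2 i3 i4 a1 a2 a3 a4 h1 h2 h3
  · exact key110 i1 i2 i3 i4 a1 a2 a3 a4 h1 h2 h3
  · exact key111 i1 i2 i3 i4 a1 a2 a3 a4 h1 h2 h3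

lemma fourpt (i1 i2 i3 i4 : ℕ) (a1 a2 a3 a4 : Fin 5) :
    Dfun i1 a1.val i2 a2.val + Dfun i3 a3.val i4 a4.val ≤
      max (Dfun i1 a1.val i3 a3.val + Dfun i2 a2.val i4 a4.val)
          (Dfun i1 a1.val i4 a4.val + Dfun i2 a2.val i3 a3.val) + 1 ∧
    Dfun i1 a1.val i3 a3.val + Dfun i2 a2.val i4 a4.val ≤
      max (Dfun i1 a1.val i2 a2.val + Dfun i3 a3.val i4 a4.val)
          (Dfun i1 a1.val i4 a4.val + Dfun i2 a2.val i3 a3.val) + 1 ∧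
    Dfun i1 a1.val i4 a4.val + Dfun i2 a2.val i3 a3.val ≤
      max (Dfun i1 a1.val i2 a2.val + Dfun i3 a3.val i4 a4.val)
          (Dfun i1 a1.val i3 a3.val + Dfun i2 a2.val i4 a4.val) + 1 := by
  have E12 := Dfun_symm i1 a1.val i2 a2.val
  have E13 := Dfun_symm i1 a1.val i3 a3.val
  have E14 := Dfun_symm i1 a1.val i4 a4.val
  have E23 := Dfun_symm i2 a2.val i3 a3.val
  have E24 := Dfun_symm i2 a2.val i4 a4.val
  have E34 := Dfun_symm i3 a3.val i4 a4.val
  rcases le_total i1 i2 with h12 | h12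
  ·
    rcases le_total i1 i3 with h13 | h13
    ·
      rcases le_total i1 i4 with h14 | h14
      ·
        rcases le_total i2 i3 with h23 | h23
        ·
          rcases le_total i2 i4 with h24 | h24
          ·
            rcases le_total i3 i4 with h34 | h34
            ·
              have K := keyQ i1 i2 i3 i4 a1 a2 a3 a4 (by omega) (by omega) (by omega)
              omega
            ·
              have K := keyQ i1 i2 i4 i3 a1 a2 a4 a3 (by omega) (by omega) (by omega)
              omega
          ·
            rcases le_total i3 i4 with h34 | h34
            ·
              have K := keyQ i1 i2 i3 i4 a1 a2 a3 a4 (by omega) (by omega) (by omega)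
              omega
            ·
              have K := keyQ i1 i4 i2 i3 a1 a4 a2 a3 (by omega) (by omega) (by omega)
              omega
        ·
          rcases le_total i2 i4 with h24 | h24
          ·
            rcases le_total i3 i4 with h34 | h34
            ·
              have K := keyQ i1 i3 i2 i4 a1 a3 a2 a4 (by omega) (by omega) (by omega)
              omega
            ·
              have K := keyQ i1 i2 i3 i4 a1 a2 a3 a4 (by omega) (by omega) (by omega)
              omega
          ·
            rcases le_total i3 i4 with h34 | h34
            ·
              have K := keyQ i1 i3 i4 i2 a1 a3 a4 a2 (by omega) (by omega) (by omega)
              omega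
            ·
              have K := keyQ i1 i4 i3 i2 a1 a4 a3 a2 (by omega) (by omega) (by omega)
              omega
      ·
        rcases le_total i2 i3 with h23 | h23
        ·
          rcases le_total i2 i4 with h24 | h24
          ·
            rcases le_total i3 i4 with h34 | h34
            ·
              have K := keyQ i1 i2 i3 i4 a1 a2 a3 a4 (by omega) (by omega) (by omega)
              omega
            ·
              have K := keyQ i1 i2 i4 i3 a1 a2 a4 a3 (by omega) (by omega) (by omega)
              omega
          ·
            rcases le_total i3 i4 with h34 | h34
            ·
              have K := keyQ i1 i2 i3 i4 a1 a2 a3 a4 (by omega) (by omega) (by omega)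
              omega
            ·
              have K := keyQ i4 i1 i2 i3 a4 a1 a2 a3 (by omega) (by omega) (by omega)
              omega
        ·
          rcases le_total i2 i4 with h24 | h24
          ·
            rcases le_total i3 i4 with h34 | h34
            ·
              have K := keyQ i1 i2 i3 i4 a1 a2 a3 a4 (by omega) (by omega) (by omega)
              omega
            ·
              have K := keyQ i1 i2 i3 i4 a1 a2 a3 a4 (by omega) (by omega) (by omega)
              omega
          ·
            rcases le_total i3 i4 with h34 | h34
            ·
              have K := keyQ i1 i3 i4 i2 a1 a3 a4 a2 (by omega) (by omega) (by omega)
              omega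
            ·
              have K := keyQ i4 i1 i3 i2 a4 a1 a3 a2 (by omega) (by omega) (by omega)
              omega
    ·
      rcases le_total i1 i4 with h14 | h14
      ·
        rcases le_total i2 i3 with h23 | h23
        ·
          rcases le_total i2 i4 with h24 | h24
          ·
            rcases le_total i3 i4 with h34 | h34
            ·
              have K := keyQ i1 i2 i3 i4 a1 a2 a3 a4 (by omega) (by omega) (by omega)
              omega
            ·
              have K := keyQ i1 i2 i3 i4 a1 a2 a3 a4 (by omega) (by omega) (by omega)
              omega
          ·
            rcases le_total i3 i4 with h34 | h34
            ·
              have K := keyQ i1 i2 i3 i4 a1 a2 a3 a4 (by omega) (by omega) (by omega)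
              omega
            ·
              have K := keyQ i1 i2 i3 i4 a1 a2 a3 a4 (by omega) (by omega) (by omega)
              omega
        ·
          rcases le_total i2 i4 with h24 | h24
          ·
            rcases le_total i3 i4 with h34 | h34
            ·
              have K := keyQ i3 i1 i2 i4 a3 a1 a2 a4 (by omega) (by omega) (by omega)
              omega
            ·
              have K := keyQ i1 i2 i3 i4 a1 a2 a3 a4 (by omega) (by omega) (by omega)
              omega
          ·
            rcases le_total i3 i4 with h34 | h34
            ·
              have K := keyQ i3 i1 i4 i2 a3 a1 a4 a2 (by omega) (by omega) (by omega)
              omega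
            ·
              have K := keyQ i1 i3 i4 i2 a1 a3 a4 a2 (by omega) (by omega) (by omega)
              omega
      ·
        rcases le_total i2 i3 with h23 | h23
        ·
          rcases le_total i2 i4 with h24 | h24
          ·
            rcases le_total i3 i4 with h34 | h34
            ·
              have K := keyQ i1 i2 i3 i4 a1 a2 a3 a4 (by omega) (by omega) (by omega)
              omega
            ·
              have K := keyQ i1 i2 i3 i4 a1 a2 a3 a4 (by omega) (by omega) (by omega)
              omega
          ·
            rcases le_total i3 i4 with h34 | h34
            ·
              have K := keyQ i1 i2 i3 i4 a1 a2 a3 a4 (by omega) (by omega) (by omega)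
              omega
            ·
              have K := keyQ i4 i1 i2 i3 a4 a1 a2 a3 (by omega) (by omega) (by omega)
              omega
        ·
          rcases le_total i2 i4 with h24 | h24
          ·
            rcases le_total i3 i4 with h34 | h34
            ·
              have K := keyQ i3 i1 i2 i4 a3 a1 a2 a4 (by omega) (by omega) (by omega)
              omega
            ·
              have K := keyQ i1 i2 i3 i4 a1 a2 a3 a4 (by omega) (by omega) (by omega)
              omega
          ·
            rcases le_total i3 i4 with h34 | h34
            ·
              have K := keyQ i3 i4 i1 i2 a3 a4 a1 a2 (by omega) (by omega) (by omega)
              omega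
            ·
              have K := keyQ i4 i3 i1 i2 a4 a3 a1 a2 (by omega) (by omega) (by omega)
              omega
  ·
    rcases le_total i1 i3 with h13 | h13
    ·
      rcases le_total i1 i4 with h14 | h14
      ·
        rcases le_total i2 i3 with h23 | h23
        ·
          rcases le_total i2 i4 with h24 | h24
          ·
            rcases le_total i3 i4 with h34 | h34
            ·
              have K := keyQ i2 i1 i3 i4 a2 a1 a3 a4 (by omega) (by omega) (by omega)
              omega
            ·
              have K := keyQ i2 i1 i4 i3 a2 a1 a4 a3 (by omega) (by omega) (by omega)
              omega
          ·
            rcases le_total i3 i4 with h34 | h34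
            ·
              have K := keyQ i1 i2 i3 i4 a1 a2 a3 a4 (by omega) (by omega) (by omega)
              omega
            ·
              have K := keyQ i1 i2 i4 i3 a1 a2 a4 a3 (by omega) (by omega) (by omega)
              omega
        ·
          rcases le_total i2 i4 with h24 | h24
          ·
            rcases le_total i3 i4 with h34 | h34
            ·
              have K := keyQ i1 i2 i3 i4 a1 a2 a3 a4 (by omega) (by omega) (by omega)
              omega
            ·
              have K := keyQ i1 i2 i3 i4 a1 a2 a3 a4 (by omega) (by omega) (by omega)
              omega
          ·
            rcases le_total i3 i4 with h34 | h34
            ·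
              have K := keyQ i1 i2 i3 i4 a1 a2 a3 a4 (by omega) (by omega) (by omega)
              omega
            ·
              have K := keyQ i1 i2 i3 i4 a1 a2 a3 a4 (by omega) (by omega) (by omega)
              omega
      ·
        rcases le_total i2 i3 with h23 | h23
        ·
          rcases le_total i2 i4 with h24 | h24
          ·
            rcases le_total i3 i4 with h34 | h34
            ·
              have K := keyQ i2 i1 i3 i4 a2 a1 a3 a4 (by omega) (by omega) (by omega)
              omega
            ·
              have K := keyQ i2 i4 i1 i3 a2 a4 a1 a3 (by omega) (by omega) (by omega)
              omega
          ·
            rcases le_total i3 i4 with h34 | h34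
            ·
              have K := keyQ i1 i2 i3 i4 a1 a2 a3 a4 (by omega) (by omega) (by omega)
              omega
            ·
              have K := keyQ i4 i2 i1 i3 a4 a2 a1 a3 (by omega) (by omega) (by omega)
              omega
        ·
          rcases le_total i2 i4 with h24 | h24
          ·
            rcases le_total i3 i4 with h34 | h34
            ·
              have K := keyQ i1 i2 i3 i4 a1 a2 a3 a4 (by omega) (by omega) (by omega)
              omega
            ·
              have K := keyQ i1 i2 i3 i4 a1 a2 a3 a4 (by omega) (by omega) (by omega)
              omega
          ·
            rcases le_total i3 i4 with h34 | h34
            ·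
              have K := keyQ i1 i2 i3 i4 a1 a2 a3 a4 (by omega) (by omega) (by omega)
              omega
            ·
              have K := keyQ i4 i1 i2 i3 a4 a1 a2 a3 (by omega) (by omega) (by omega)
              omega
    ·
      rcases le_total i1 i4 with h14 | h14
      ·
        rcases le_total i2 i3 with h23 | h23
        ·
          rcases le_total i2 i4 with h24 | h24
          ·
            rcases le_total i3 i4 with h34 | h34
            ·
              have K := keyQ i2 i3 i1 i4 a2 a3 a1 a4 (by omega) (by omega) (by omega)
              omega
            ·
              have K := keyQ i2 i1 i3 i4 a2 a1 a3 a4 (by omega) (by omega) (by omega)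
              omega
          ·
            rcases le_total i3 i4 with h34 | h34
            ·
              have K := keyQ i1 i2 i3 i4 a1 a2 a3 a4 (by omega) (by omega) (by omega)
              omega
            ·
              have K := keyQ i1 i2 i3 i4 a1 a2 a3 a4 (by omega) (by omega) (by omega)
              omega
        ·
          rcases le_total i2 i4 with h24 | h24
          ·
            rcases le_total i3 i4 with h34 | h34
            ·
              have K := keyQ i3 i2 i1 i4 a3 a2 a1 a4 (by omega) (by omega) (by omega)
              omega
            ·
              have K := keyQ i1 i2 i3 i4 a1 a2 a3 a4 (by omega) (by omega) (by omega)
              omega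
          ·
            rcases le_total i3 i4 with h34 | h34
            ·
              have K := keyQ i3 i1 i2 i4 a3 a1 a2 a4 (by omega) (by omega) (by omega)
              omega
            ·
              have K := keyQ i1 i2 i3 i4 a1 a2 a3 a4 (by omega) (by omega) (by omega)
              omega
      ·
        rcases le_total i2 i3 with h23 | h23
        ·
          rcases le_total i2 i4 with h24 | h24
          ·
            rcases le_total i3 i4 with h34 | h34
            ·
              have K := keyQ i2 i3 i4 i1 a2 a3 a4 a1 (by omega) (by omega) (by omega)
              omega
            ·
              have K := keyQ i2 i4 i3 i1 a2 a4 a3 a1 (by omega) (by omega) (by omega)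
              omega
          ·
            rcases le_total i3 i4 with h34 | h34
            ·
              have K := keyQ i2 i3 i4 i1 a2 a3 a4 a1 (by omega) (by omega) (by omega)
              omega
            ·
              have K := keyQ i4 i2 i3 i1 a4 a2 a3 a1 (by omega) (by omega) (by omega)
              omega
        ·
          rcases le_total i2 i4 with h24 | h24
          ·
            rcases le_total i3 i4 with h34 | h34
            ·
              have K := keyQ i3 i2 i4 i1 a3 a2 a4 a1 (by omega) (by omega) (by omega)
              omega
            ·
              have K := keyQ i2 i3 i4 i1 a2 a3 a4 a1 (by omega) (by omega) (by omega)
              omega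
          ·
            rcases le_total i3 i4 with h34 | h34
            ·
              have K := keyQ i3 i4 i2 i1 a3 a4 a2 a1 (by omega) (by omega) (by omega)
              omega
            ·
              have K := keyQ i4 i3 i2 i1 a4 a3 a2 a1 (by omega) (by omega) (by omega)
              omega

/-! ### graph side -/

lemma adjP {k : ℕ} (i : Fin (3*k)) (a b : Fin 5)
    (h : (a.val+1)%5 = b.val ∨ (b.val+1)%5 = a.val) : (Gk k).Adj (i,a) (i,b) := by
  rw [Gk, SimpleGraph.fromRel_adj]
  constructor
  · intro he
    have hab : a = b := (Prod.ext_iff.mp he).2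
    have h5 := a.isLt
    have := Fin.val_eq_val a b
    omega
  · rcases h with h | h
    · exact Or.inl (Or.inl ⟨rfl, h⟩)
    · exact Or.inr (Or.inl ⟨rfl, h⟩)

lemma adjB {k : ℕ} (i j : Fin (3*k)) (h : i.val + 1 = j.val) :
    (Gk k).Adj (i, (1 : Fin 5)) (j, (4 : Fin 5)) := by
  rw [Gk, SimpleGraph.fromRel_adj]
  refine ⟨?_, Or.inl (Or.inr ⟨h, rfl, rfl⟩)⟩
  intro he
  have hij : i = j := (Prod.ext_iff.mp he).1
  have := Fin.val_eq_val i j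
  omega

lemma walkPent {k : ℕ} (i : Fin (3*k)) (a b : Fin 5) :
    ∃ p : (Gk k).Walk (i,a) (i,b), p.length = d5n a.val b.val := by
  fin_cases a <;> fin_cases b
  · refine ⟨SimpleGraph.Walk.nil, ?_⟩
    rfl
  · refine ⟨(SimpleGraph.Walk.cons (adjP i 0 1 (by decide)) SimpleGraph.Walk.nil), ?_⟩
    rfl
  · refine ⟨(SimpleGraph.Walk.cons (adjP i 0 1 (by decide)) (SimpleGraph.Walk.cons (adjP i 1 2 (by decide)) SimpleGraph.Walk.nil)), ?_⟩
    rfl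
  · refine ⟨(SimpleGraph.Walk.cons (adjP i 0 4 (by decide)) (SimpleGraph.Walk.cons (adjP i 4 3 (by decide)) SimpleGraph.Walk.nil)), ?_⟩
    rfl
  · refine ⟨(SimpleGraph.Walk.cons (adjP i 0 4 (by decide)) SimpleGraph.Walk.nil), ?_⟩
    rfl
  · refine ⟨(SimpleGraph.Walk.cons (adjP i 1 0 (by decide)) SimpleGraph.Walk.nil), ?_⟩
    rfl
  · refine ⟨SimpleGraph.Walk.nil, ?_⟩
    rfl
  · refine ⟨(SimpleGraph.Walk.cons (adjP i 1 2 (by decide)) SimpleGraph.Walk.nil), ?_⟩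
    rfl
  · refine ⟨(SimpleGraph.Walk.cons (adjP i 1 2 (by decide)) (SimpleGraph.Walk.cons (adjP i 2 3 (by decide)) SimpleGraph.Walk.nil)), ?_⟩
    rfl
  · refine ⟨(SimpleGraph.Walk.cons (adjP i 1 0 (by decide)) (SimpleGraph.Walk.cons (adjP i 0 4 (by decide)) SimpleGraph.Walk.nil)), ?_⟩
    rfl
  · refine ⟨(SimpleGraph.Walk.cons (adjP i 2 1 (by decide)) (SimpleGraph.Walk.cons (adjP i 1 0 (by decide)) SimpleGraph.Walk.nil)), ?_⟩
    rfl
  · refine ⟨(SimpleGraph.Walk.cons (adjP i 2 1 (by decide)) SimpleGraph.Walk.nil), ?_⟩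
    rfl
  · refine ⟨SimpleGraph.Walk.nil, ?_⟩
    rfl
  · refine ⟨(SimpleGraph.Walk.cons (adjP i 2 3 (by decide)) SimpleGraph.Walk.nil), ?_⟩
    rfl
  · refine ⟨(SimpleGraph.Walk.cons (adjP i 2 3 (by decide)) (SimpleGraph.Walk.cons (adjP i 3 4 (by decide)) SimpleGraph.Walk.nil)), ?_⟩
    rfl
  · refine ⟨(SimpleGraph.Walk.cons (adjP i 3 4 (by decide)) (SimpleGraph.Walk.cons (adjP i 4 0 (by decide)) SimpleGraph.Walk.nil)), ?_⟩
    rfl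
  · refine ⟨(SimpleGraph.Walk.cons (adjP i 3 2 (by decide)) (SimpleGraph.Walk.cons (adjP i 2 1 (by decide)) SimpleGraph.Walk.nil)), ?_⟩
    rfl
  · refine ⟨(SimpleGraph.Walk.cons (adjP i 3 2 (by decide)) SimpleGraph.Walk.nil), ?_⟩
    rfl
  · refine ⟨SimpleGraph.Walk.nil, ?_⟩
    rfl
  · refine ⟨(SimpleGraph.Walk.cons (adjP i 3 4 (by decide)) SimpleGraph.Walk.nil), ?_⟩
    rfl
  · refine ⟨(SimpleGraph.Walk.cons (adjP i 4 0 (by decide)) SimpleGraph.Walk.nil), ?_⟩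
    rfl
  · refine ⟨(SimpleGraph.Walk.cons (adjP i 4 0 (by decide)) (SimpleGraph.Walk.cons (adjP i 0 1 (by decide)) SimpleGraph.Walk.nil)), ?_⟩
    rfl
  · refine ⟨(SimpleGraph.Walk.cons (adjP i 4 3 (by decide)) (SimpleGraph.Walk.cons (adjP i 3 2 (by decide)) SimpleGraph.Walk.nil)), ?_⟩
    rfl
  · refine ⟨(SimpleGraph.Walk.cons (adjP i 4 3 (by decide)) SimpleGraph.Walk.nil), ?_⟩
    rfl
  · refine ⟨SimpleGraph.Walk.nil, ?_⟩
    rfl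


lemma Dstep (i j a b : ℕ) (ha : a < 5) (hb : b < 5) (h : i < j) :
    Dfun i a j b = d5n a 1 + (1 + Dfun (i+1) 4 j b) := by
  rcases Nat.lt_or_ge (i+1) j with h2 | h2
  · rw [Dfun_lt h, Dfun_lt h2]
    have : d5n 4 1 = 2 := rfl
    omega
  · have hj : i + 1 = j := by omega
    rw [Dfun_lt h, Dfun_same hj]
    have h44 : d5n 4 4 = 0 := rfl
    have hb4 := d5n_comm b 4
    omega

lemma walk_up {k : ℕ} : ∀ (g : ℕ) (i j : Fin (3*k)) (a b : Fin 5), i.val + g = j.val →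
    ∃ p : (Gk k).Walk (i,a) (j,b), p.length = Dfun i.val a.val j.val b.val := by
  intro g
  induction g with
  | zero =>
    intro i j a b hij
    have hij' : i = j := Fin.ext (by omega)
    subst hij'
    obtain ⟨p, hp⟩ := walkPent i a b
    exact ⟨p, by rw [hp, Dfun_same rfl]⟩
  | succ g ih =>
    intro i j a b hij
    have hlt : i.val + 1 < 3*k := by have := j.isLt; omega
    obtain ⟨p1, hp1⟩ := walkPent i a (1 : Fin 5)
    have hadj : (Gk k).Adj (i, (1:Fin 5)) (⟨i.val+1, hlt⟩, (4:Fin 5)) := adjB i ⟨i.val+1, hlt⟩ rfl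
    obtain ⟨p2, hp2⟩ := ih ⟨i.val+1, hlt⟩ j (4 : Fin 5) b (by simpa using by omega)
    refine ⟨p1.append (SimpleGraph.Walk.cons hadj p2), ?_⟩
    rw [SimpleGraph.Walk.length_append, SimpleGraph.Walk.length_cons, hp1, hp2]
    rw [Dstep i.val j.val a.val b.val a.isLt b.isLt (by omega)]
    have hv4 : ((4 : Fin 5) : ℕ) = 4 := rfl
    have hv1 : ((1 : Fin 5) : ℕ) = 1 := rfl
    simp only [Fin.val_mk, hv4, hv1]
    omega

lemma walk_any {k : ℕ} (u v : Fin (3*k) × Fin 5) :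
    ∃ p : (Gk k).Walk u v, p.length = Dfun u.1.val u.2.val v.1.val v.2.val := by
  rcases le_or_gt u.1.val v.1.val with h | h
  · obtain ⟨p, hp⟩ := walk_up (v.1.val - u.1.val) u.1 v.1 u.2 v.2 (by omega)
    exact ⟨p, by simpa using hp⟩
  · obtain ⟨p, hp⟩ := walk_up (u.1.val - v.1.val) v.1 u.1 v.2 u.2 (by omega)
    refine ⟨(p.reverse.copy (by simp) (by simp)), ?_⟩
    rw [SimpleGraph.Walk.length_copy, SimpleGraph.Walk.length_reverse, hp, Dfun_symm]

lemma lipN (i j m : ℕ) (a b c : Fin 5)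
    (h : (i = j ∧ ((a.val+1)%5 = b.val ∨ (b.val+1)%5 = a.val)) ∨
         (i+1 = j ∧ a.val = 1 ∧ b.val = 4) ∨ (j+1 = i ∧ a.val = 4 ∧ b.val = 1)) :
    Dfun i a.val m c.val ≤ Dfun j b.val m c.val + 1 := by
  have e11 : d5n 1 1 = 0 := rfl
  have e14 : d5n 1 4 = 2 := rfl
  have e41 : d5n 4 1 = 2 := rfl
  have e44 : d5n 4 4 = 0 := rfl
  obtain ⟨-, -, -, -, -, hc1, hc4⟩ := sing c
  rcases h with ⟨hij, hab⟩ | ⟨hij, ha, hb⟩ | ⟨hij, ha, hb⟩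
  · subst hij
    have key : d5n a.val c.val ≤ d5n b.val c.val + 1 ∧ d5n b.val c.val ≤ d5n a.val c.val + 1 ∧
        d5n a.val 1 ≤ d5n b.val 1 + 1 ∧ d5n b.val 1 ≤ d5n a.val 1 + 1 ∧
        d5n a.val 4 ≤ d5n b.val 4 + 1 ∧ d5n b.val 4 ≤ d5n a.val 4 + 1 := by
      rcases hab with hab | hab
      · exact adjF a b c hab
      · obtain ⟨x1,x2,x3,x4,x5,x6⟩ := adjF b a c hab
        have c1 := d5n_comm a.val c.val
        have c2 := d5n_comm b.val c.val
        omega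
    obtain ⟨k1,k2,k3,k4,k5,k6⟩ := key
    rcases Nat.lt_trichotomy i m with hm | hm | hm
    · rw [Dfun_lt hm, Dfun_lt hm]; omega
    · rw [Dfun_same hm, Dfun_same hm]; omega
    · rw [Dfun_gt hm, Dfun_gt hm]; omega
  · rcases Nat.lt_trichotomy m i with hm | hm | hm
    · rw [Dfun_gt hm, Dfun_gt (show m < j by omega), ha, hb]; omega
    · rw [Dfun_same hm.symm, Dfun_gt (show m < j by omega), ha, hb]; omega
    · rcases Nat.lt_trichotomy m j with h2 | h2 | h2
      · exact absurd rfl (by omega : ¬ (0:ℕ) = 0)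
      · rw [Dfun_lt hm, Dfun_same h2.symm, ha, hb]; omega
      · rw [Dfun_lt hm, Dfun_lt (show j < m by omega), ha, hb]; omega
  · rcases Nat.lt_trichotomy m j with hm | hm | hm
    · rw [Dfun_gt (show m < i by omega), Dfun_gt hm, ha, hb]; omega
    · rw [Dfun_gt (show m < i by omega), Dfun_same hm.symm, ha, hb]; omega
    · rcases Nat.lt_trichotomy m i with h2 | h2 | h2
      · exact absurd rfl (by omega : ¬ (0:ℕ) = 0)
      · rw [Dfun_same h2.symm, Dfun_lt hm, ha, hb]; omega
      · rw [Dfun_lt (show i < m by omega), Dfun_lt hm, ha, hb]; omega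

lemma lower {k : ℕ} {u v : Fin (3*k) × Fin 5} (p : (Gk k).Walk u v) :
    Dfun u.1.val u.2.val v.1.val v.2.val ≤ p.length := by
  induction p with
  | nil =>
    rw [Dfun_same rfl]
    simp [(sing _).1]
  | @cons x y z h p ih =>
    rw [SimpleGraph.Walk.length_cons]
    have h' := h
    rw [Gk, SimpleGraph.fromRel_adj] at h'
    obtain ⟨-, hrel⟩ := h'
    have key : Dfun x.1.val x.2.val z.1.val z.2.val ≤ Dfun y.1.val y.2.val z.1.val z.2.val + 1 := by
      apply lipN
      rcases hrel with (⟨e1, e2⟩ | ⟨e1, e2, e3⟩) | (⟨e1, e2⟩ | ⟨e1, e2, e3⟩)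
      · exact Or.inl ⟨by rw [e1], Or.inl e2⟩
      · exact Or.inr (Or.inl ⟨e1, e2, e3⟩)
      · exact Or.inl ⟨by rw [e1], Or.inr e2⟩
      · exact Or.inr (Or.inr ⟨e1, e3, e2⟩)
    omega

lemma dist_eq_Dfun {k : ℕ} (u v : Fin (3*k) × Fin 5) :
    (Gk k).dist u v = Dfun u.1.val u.2.val v.1.val v.2.val := by
  obtain ⟨p, hp⟩ := walk_any u v
  refine le_antisymm (hp ▸ SimpleGraph.dist_le p) ?_
  obtain ⟨q, hq⟩ := SimpleGraph.Reachable.exists_walk_length_eq_dist ⟨p⟩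
  exact hq ▸ lower q

theorem Gk_half_hyperbolic (k : ℕ) (hk : 1 ≤ k) :
    ∀ u v w x : Fin (3*k) × Fin 5,
      (Gk k).dist u v + (Gk k).dist w x ≤
        max ((Gk k).dist u w + (Gk k).dist v x) ((Gk k).dist u x + (Gk k).dist v w) + 1 ∧
      (Gk k).dist u w + (Gk k).dist v x ≤
        max ((Gk k).dist u v + (Gk k).dist w x) ((Gk k).dist u x + (Gk k).dist v w) + 1 ∧
      (Gk k).dist u x + (Gk k).dist v w ≤
        max ((Gk k).dist u v + (Gk k).dist w x) ((Gk k).dist u w + (Gk k).dist v x) + 1 := by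
  intro u v w x
  simp only [dist_eq_Dfun]
  exact fourpt u.1.val v.1.val w.1.val x.1.val u.2 v.2 w.2 x.2
end

section
/- Let G_k be the graph formed by 3k pentagons A_i = (a_i, b_i, c_i, d_i, e_i, a_i) joined by edges b_i e_{i+1} for 1 ≤ i ≤ 3k−1. Then the path P = (e_1, a_1, b_1, e_2, a_2, b_2, ..., e_{3k}, a_{3k}, b_{3k}) is an isometric path in G_k of length 9k − 1. -/
open SimpleGraph

variable {V : Type*}

/-!
Give vertex `(i, x)` of `G_k` the height `3 i + h x` with `h = (1, 2, 1, 1, 0)` on `(a, b, c, d, e)`.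
Adjacent vertices have heights differing by at most one, so the height difference bounds the
distance from below, while the `t`-th vertex of the path has height exactly `t`.
-/

namespace SimpleGraph

variable {G : SimpleGraph V}

theorem Walk.sub_le_length {φ : V → ℤ} (hφ : ∀ u v, G.Adj u v → φ v ≤ φ u + 1) {u v : V}
    (w : G.Walk u v) : φ v - φ u ≤ w.length := by
  induction w with
  | nil => simp
  | cons h _ ih =>
    rw [Walk.length_cons]
    have := hφ _ _ h
    omega

theorem sub_le_dist {φ : V → ℤ} (hφ : ∀ u v, G.Adj u v → φ v ≤ φ u + 1) {u v : V}
    (huv : G.Reachable u v) : φ v - φ u ≤ G.dist u v := by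
  obtain ⟨w, hw⟩ := huv.exists_walk_length_eq_dist
  exact hw ▸ w.sub_le_length hφ

theorem exists_walk_length_eq_sub {p : ℕ → V} {k : ℕ} (hp : ∀ i < k, G.Adj (p i) (p (i + 1)))
    {i j : ℕ} (hij : i ≤ j) (hj : j ≤ k) : ∃ w : G.Walk (p i) (p j), w.length = j - i := by
  induction j, hij using Nat.le_induction with
  | base => exact ⟨Walk.nil, by simp⟩
  | succ j _ ih =>
    obtain ⟨w, hw⟩ := ih (by omega)
    exact ⟨w.concat (hp j (by omega)), by simp [hw]; omega⟩

theorem dist_eq_sub_of_height {p : ℕ → V} {k : ℕ} (hp : ∀ i < k, G.Adj (p i) (p (i + 1)))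
    {φ : V → ℤ} (hφ : ∀ u v, G.Adj u v → φ v ≤ φ u + 1) (hφp : ∀ i ≤ k, φ (p i) = i)
    {i j : ℕ} (hij : i ≤ j) (hj : j ≤ k) : G.dist (p i) (p j) = j - i := by
  obtain ⟨w, hw⟩ := exists_walk_length_eq_sub hp hij hj
  have hle := hw ▸ dist_le w
  have hge := sub_le_dist hφ w.reachable
  rw [hφp i (by omega), hφp j hj] at hge
  omega

end SimpleGraph

theorem isIsomPath_of_height {G : SimpleGraph V} {p : ℕ → V} {k : ℕ}
    (hp : ∀ i < k, G.Adj (p i) (p (i + 1))) {φ : V → ℤ} (hφ : ∀ u v, G.Adj u v → φ v ≤ φ u + 1) (hφp : ∀ i ≤ k, φ (p i) = i) :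
    IsIsomPath G p k := by
  intro i j hi hj
  rcases le_total i j with hij | hji
  · rw [dist_eq_sub_of_height hp hφ hφp hij hj]
    omega
  · rw [dist_comm, dist_eq_sub_of_height hp hφ hφp hji hi]
    omega

theorem pentRel_irrefl (k : ℕ) (x : Fin (3 * k) × Fin 5) : ¬pentRel k x x := by
  unfold pentRel
  omega

theorem Gk_adj_of_pentRel {k : ℕ} {x y : Fin (3 * k) × Fin 5} (h : pentRel k x y) :
    (Gk k).Adj x y :=
  (fromRel_adj _ _ _).2 ⟨fun hxy => pentRel_irrefl k x (hxy ▸ h), Or.inl h⟩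

def pentHeight (k : ℕ) (x : Fin (3 * k) × Fin 5) : ℤ :=
  3 * x.1.val + ![1, 2, 1, 1, 0] x.2

theorem pentHeight_le_of_pentRel {k : ℕ} {x y : Fin (3 * k) × Fin 5} (h : pentRel k x y) :
    pentHeight k y ≤ pentHeight k x + 1 ∧ pentHeight k x ≤ pentHeight k y + 1 := by
  obtain ⟨i, a⟩ := x
  obtain ⟨j, b⟩ := y
  unfold pentRel at h
  unfold pentHeight
  fin_cases a <;> fin_cases b <;> simp at h ⊢ <;> omega

theorem pentHeight_le_of_adj {k : ℕ} {x y : Fin (3 * k) × Fin 5} (h : (Gk k).Adj x y) :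
    pentHeight k y ≤ pentHeight k x + 1 := by
  rcases ((fromRel_adj _ _ _).1 h).2 with hxy | hyx
  · exact (pentHeight_le_of_pentRel hxy).1
  · exact (pentHeight_le_of_pentRel hyx).2

/-- The `t`-th vertex of `(e₁, a₁, b₁, e₂, a₂, b₂, …)`; the reduction mod `3 * k` only serves to
land in `Fin (3 * k)` and is the identity for `t < 9 * k`. -/
def pentPath (k : ℕ) (hk : 0 < 3 * k) (t : ℕ) : Fin (3 * k) × Fin 5 :=
  (⟨(t / 3) % (3 * k), Nat.mod_lt _ hk⟩, if t % 3 = 0 then 4 else if t % 3 = 1 then 0 else 1)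

theorem pentRel_pentPath {k : ℕ} (hk : 0 < 3 * k) {t : ℕ} (ht : t + 1 < 9 * k) :
    pentRel k (pentPath k hk t) (pentPath k hk (t + 1)) := by
  have h₀ : t / 3 % (3 * k) = t / 3 := Nat.mod_eq_of_lt (by omega)
  have h₁ : (t + 1) / 3 % (3 * k) = (t + 1) / 3 := Nat.mod_eq_of_lt (by omega)
  unfold pentRel pentPath
  simp only [Fin.ext_iff, h₀, h₁]
  split_ifs <;> simp <;> omega

theorem pentHeight_pentPath {k : ℕ} (hk : 0 < 3 * k) {t : ℕ} (ht : t < 9 * k) :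
    pentHeight k (pentPath k hk t) = t := by
  have h₀ : t / 3 % (3 * k) = t / 3 := Nat.mod_eq_of_lt (by omega)
  unfold pentHeight pentPath
  split_ifs <;> simp [h₀] <;> omega

theorem Gk_diametral_path_isometric (k : ℕ) (hk : 1 ≤ k) :
    IsIsomPath (Gk k)
      (fun i => (⟨(i / 3) % (3 * k), Nat.mod_lt _ (by omega)⟩,
        if i % 3 = 0 then (4 : Fin 5) else if i % 3 = 1 then 0 else 1))
      (9 * k - 1) := by
  have hk' : 0 < 3 * k := by omega
  exact isIsomPath_of_height (p := pentPath k hk')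
    (fun t ht => Gk_adj_of_pentRel (pentRel_pentPath hk' (by omega)))
    (fun _ _ => pentHeight_le_of_adj) (fun t ht => pentHeight_pentPath hk' (by omega))
end

section
/- Every multipacking of the graph G_k (3k pentagons A_i joined by edges b_i e_{i+1}) contains at most one vertex from each pentagon A_i; hence mp(G_k) ≤ 3k. -/
open SimpleGraph

variable {V : Type*}

lemma adj_pent (k : ℕ) (i : Fin (3*k)) (a b : Fin 5) (h : (a.val + 1) % 5 = b.val) :
    (Gk k).Adj (i, a) (i, b) := by
  have hne : (i, a) ≠ (i, b) := by
    intro heq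
    have : a = b := congrArg Prod.snd heq
    subst this
    have := a.isLt
    omega
  exact SimpleGraph.fromRel_adj _ _ _ |>.mpr ⟨hne, Or.inl (Or.inl ⟨rfl, h⟩)⟩

lemma dist_le_one_of_close (k : ℕ) (i : Fin (3*k)) (c a : Fin 5)
    (h : c = a ∨ (c.val + 1) % 5 = a.val ∨ (a.val + 1) % 5 = c.val) :
    (Gk k).dist (i, c) (i, a) ≤ 1 := by
  rcases h with rfl | h | h
  · simp [SimpleGraph.dist_self]
  · exact le_of_eq ((SimpleGraph.dist_eq_one_iff_adj).mpr (adj_pent k i c a h))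
  · exact le_of_eq ((SimpleGraph.dist_eq_one_iff_adj).mpr ((adj_pent k i a c h).symm))

lemma close_exists (a b : Fin 5) (hab : a ≠ b) :
    ∃ c : Fin 5, (c = a ∨ (c.val + 1) % 5 = a.val ∨ (a.val + 1) % 5 = c.val) ∧
      (c = b ∨ (c.val + 1) % 5 = b.val ∨ (b.val + 1) % 5 = c.val) := by
  revert hab; revert b; revert a; decide

theorem Gk_multipacking_one_per_pentagon (k : ℕ) (hk : 1 ≤ k) :
    (∀ M : Set (Fin (3*k) × Fin 5), IsMultipacking (Gk k) M →
      ∀ i : Fin (3*k), (M ∩ {x | x.1 = i}).ncard ≤ 1) ∧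
    mp (Gk k) ≤ 3 * k := by
  have h3k : 0 < 3 * k := by omega
  have hgd : 1 ≤ gdiam (Gk k) := by
    set i0 : Fin (3*k) := ⟨0, h3k⟩
    have hadj : (Gk k).Adj (i0, 0) (i0, 1) := adj_pent k i0 0 1 (by norm_num)
    have hd : (Gk k).dist (i0, 0) (i0, 1) = 1 := SimpleGraph.dist_eq_one_iff_adj.mpr hadj
    calc (1 : ℕ) = (Gk k).dist (i0, 0) (i0, 1) := hd.symm
      _ ≤ ecc (Gk k) (i0, 0) := Finset.le_sup (Finset.mem_univ _)
      _ ≤ gdiam (Gk k) := Finset.le_sup (Finset.mem_univ _)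
  have part1 : ∀ M : Set (Fin (3*k) × Fin 5), IsMultipacking (Gk k) M →
      ∀ i : Fin (3*k), (M ∩ {x | x.1 = i}).ncard ≤ 1 := by
    intro M hM i
    rw [Set.ncard_le_one (Set.toFinite _)]
    intro x hx y hy
    by_contra hne
    obtain ⟨hxM, (hxi : x.1 = i)⟩ := hx
    obtain ⟨hyM, (hyi : y.1 = i)⟩ := hy
    have hab : x.2 ≠ y.2 := fun h => hne (Prod.ext (hxi.trans hyi.symm) h)
    obtain ⟨c, hca, hcb⟩ := close_exists x.2 y.2 hab
    have hx' : x = (i, x.2) := Prod.ext hxi rfl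
    have hy' : y = (i, y.2) := Prod.ext hyi rfl
    have hsub : ({x, y} : Set _) ⊆ M ∩ {u | (Gk k).dist (i, c) u ≤ 1} := by
      rintro z (rfl | rfl)
      · exact ⟨hxM, by rw [hx']; exact dist_le_one_of_close k i c z.2 hca⟩
      · exact ⟨hyM, by rw [hy']; exact dist_le_one_of_close k i c z.2 hcb⟩
    have h2 : 2 ≤ (M ∩ {u | (Gk k).dist (i, c) u ≤ 1}).ncard := by
      rw [← Set.ncard_pair hne]
      exact Set.ncard_le_ncard hsub (Set.toFinite _)
    have := hM (i, c) 1 le_rfl hgd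
    omega
  refine ⟨part1, ?_⟩
  apply csSup_le'
  rintro n ⟨M, hM, rfl⟩
  calc M.ncard ≤ (Set.univ : Set (Fin (3*k))).ncard := by
        apply Set.ncard_le_ncard_of_injOn Prod.fst (fun a _ => Set.mem_univ _)
        · intro x hx y hy hxy
          have h1 := part1 M hM x.1
          rw [Set.ncard_le_one (Set.toFinite _)] at h1
          exact h1 x ⟨hx, rfl⟩ y ⟨hy, hxy.symm⟩
    _ = 3 * k := by simp [Set.ncard_univ]
end

section
/- If G is a cactus graph with a vertex z not in an isometric subgraph H of the special form (a cycle with attached pendant isometric paths), then the number of vertices v of H for which there exists a path from z to v meeting H only in v is at most 2. -/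
open SimpleGraph

variable {V : Type*}

def cycVerts (cyc : ℕ → V) (γ : ℕ) : Set V := {x | ∃ i, i < γ ∧ cyc i = x}

/-- An isometric subgraph of a cactus consisting of a cycle with three pendant
isometric paths attached at three distinct cycle vertices. -/
structure SpecialSubgraph (G : SimpleGraph V) where
  γ : ℕ
  hγ : 3 ≤ γ
  cyc : ℕ → V
  cycInj : ∀ i j, i < γ → j < γ → cyc i = cyc j → i = j
  cycAdj : ∀ i, i < γ → G.Adj (cyc i) (cyc ((i+1) % γ))
  t₀ : ℕ
  t₁ : ℕ
  t₂ : ℕ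
  ht₀ : t₀ < γ
  ht₁ : t₁ < γ
  ht₂ : t₂ < γ
  hne : t₀ ≠ t₁ ∧ t₁ ≠ t₂ ∧ t₀ ≠ t₂
  la : ℕ
  lb : ℕ
  ld : ℕ
  pw : ℕ → V
  qw : ℕ → V
  rw : ℕ → V
  hp : IsIsomPath G pw la
  hq : IsIsomPath G qw lb
  hr : IsIsomPath G rw ld
  hp0 : pw 0 = cyc t₀
  hq0 : qw 0 = cyc t₁
  hr0 : rw 0 = cyc t₂
  disjPQ : pathVerts pw la ∩ pathVerts qw lb = ∅
  disjQR : pathVerts qw lb ∩ pathVerts rw ld = ∅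
  disjPR : pathVerts pw la ∩ pathVerts rw ld = ∅
  meetP : pathVerts pw la ∩ cycVerts cyc γ = {cyc t₀}
  meetQ : pathVerts qw lb ∩ cycVerts cyc γ = {cyc t₁}
  meetR : pathVerts rw ld ∩ cycVerts cyc γ = {cyc t₂}

def SpecialSubgraph.verts {G : SimpleGraph V} (H : SpecialSubgraph G) : Set V :=
  cycVerts H.cyc H.γ ∪ pathVerts H.pw H.la ∪ pathVerts H.qw H.lb ∪ pathVerts H.rw H.ld

/-!
The vertex set `S` of `H` induces a connected subgraph. For two attachment vertices `a ≠ b` of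
`z`, with outside neighbours `a'`, `b'` on their attachment paths, a path `a' ⇝ b'` outside `S`
through `z` and a path `b ⇝ a` inside `S` close up, via the edges `aa'` and `bb'`, to a cycle
whose only edges between `S` and its complement are `aa'` and `bb'`. Three attachment vertices
`v₁, v₂, v₃` give such cycles for `v₁v₂` and `v₁v₃`; both contain `v₁v₁'`, so in a cactus they
have the same edges, and the second would contain the crossing edge `v₂v₂'`.
-/

lemma IsIsomPath.adj {G : SimpleGraph V} {p : ℕ → V} {k : ℕ} (hp : IsIsomPath G p k)
    {i : ℕ} (hi : i < k) : G.Adj (p i) (p (i + 1)) := by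
  rw [← dist_eq_one_iff_adj, hp i (i + 1) hi.le hi]
  omega

lemma preconnected_induce_pathVerts {G : SimpleGraph V} {p : ℕ → V} :
    ∀ {k : ℕ}, (∀ i < k, G.Adj (p i) (p (i + 1))) → (G.induce (pathVerts p k)).Preconnected
  | 0, _ => by
    have hsingleton : pathVerts p 0 = {p 0} := by
      ext x
      simp [pathVerts, eq_comm]
    rw [hsingleton]
    exact .of_subsingleton
  | k + 1, hadj => by
    have hsplit : pathVerts p (k + 1) = pathVerts p k ∪ {p k, p (k + 1)} := by
      ext x
      simp only [pathVerts, Set.mem_union, Set.mem_ofPred_eq, Set.mem_insert_iff,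
        Set.mem_singleton_iff]
      constructor
      · rintro ⟨i, hi, rfl⟩
        rcases Nat.lt_or_eq_of_le hi with hi | rfl
        · exact Or.inl ⟨i, by omega, rfl⟩
        · exact Or.inr (Or.inr rfl)
      · rintro (⟨i, hi, rfl⟩ | rfl | rfl)
        · exact ⟨i, by omega, rfl⟩
        · exact ⟨k, by omega, rfl⟩
        · exact ⟨k + 1, le_rfl, rfl⟩
    rw [hsplit]
    refine (induce_union_connected (preconnected_induce_pathVerts fun i hi ↦ hadj i (by omega))
      (induce_pair_connected_of_adj (hadj k (by omega))).preconnected ?_).preconnected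
    exact ⟨p k, ⟨k, le_rfl, rfl⟩, Set.mem_insert _ _⟩

lemma cycVerts_eq_pathVerts (cyc : ℕ → V) {γ : ℕ} (hγ : 0 < γ) :
    cycVerts cyc γ = pathVerts cyc (γ - 1) := by
  ext x
  simp only [cycVerts, pathVerts, Set.mem_ofPred_eq]
  exact ⟨fun ⟨i, hi, h⟩ ↦ ⟨i, by omega, h⟩, fun ⟨i, hi, h⟩ ↦ ⟨i, by omega, h⟩⟩

lemma SpecialSubgraph.connected_induce_verts {G : SimpleGraph V} (H : SpecialSubgraph G) :
    (G.induce H.verts).Connected := by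
  have hcyc : (G.induce (cycVerts H.cyc H.γ)).Preconnected := by
    rw [cycVerts_eq_pathVerts H.cyc (by have := H.hγ; omega)]
    refine preconnected_induce_pathVerts fun i hi ↦ ?_
    simpa [Nat.mod_eq_of_lt (show i + 1 < H.γ by omega)] using H.cycAdj i (by omega)
  have hcyc_mem {t : ℕ} (ht : t < H.γ) : H.cyc t ∈ cycVerts H.cyc H.γ := ⟨t, ht, rfl⟩
  have hpath_mem {p : ℕ → V} {k : ℕ} {x : V} (h0 : p 0 = x) : x ∈ pathVerts p k :=
    ⟨0, k.zero_le, h0⟩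
  have hcp := induce_union_connected hcyc (preconnected_induce_pathVerts fun _ ↦ H.hp.adj)
    ⟨_, hcyc_mem H.ht₀, hpath_mem H.hp0⟩
  have hcpq := induce_union_connected hcp.preconnected
    (preconnected_induce_pathVerts fun _ ↦ H.hq.adj)
    ⟨_, Or.inl (hcyc_mem H.ht₁), hpath_mem H.hq0⟩
  exact induce_union_connected hcpq.preconnected (preconnected_induce_pathVerts fun _ ↦ H.hr.adj)
    ⟨_, Or.inl (Or.inl (hcyc_mem H.ht₂)), hpath_mem H.hr0⟩

namespace SimpleGraph

variable {G : SimpleGraph V} {S : Set V}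

lemma Preconnected.exists_isPath_of_induce (hS : (G.induce S).Preconnected) {a b : V}
    (ha : a ∈ S) (hb : b ∈ S) : ∃ R : G.Walk a b, R.IsPath ∧ ∀ u ∈ R.support, u ∈ S := by
  classical
  obtain ⟨R⟩ := hS ⟨a, ha⟩ ⟨b, hb⟩
  refine ⟨(R.map (Embedding.induce S).toHom).bypass, Walk.bypass_isPath _, fun u hu ↦ ?_⟩
  obtain ⟨x, -, rfl⟩ := List.mem_map.mp
    (Walk.support_map _ R ▸ Walk.support_bypass_subset_support _ hu)
  exact x.2

lemma Walk.IsPath.exists_adj_walk_compl {z v : V} {W : G.Walk z v} (hW : W.IsPath)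
    (hz : z ∉ S) (hv : v ∈ S) (hWS : ∀ u ∈ W.support, u ∈ S → u = v) :
    ∃ w, G.Adj v w ∧ ∃ T : G.Walk w z, ∀ u ∈ T.support, u ∉ S := by
  have hnil : ¬W.reverse.Nil := fun h ↦ hz (Walk.Nil.eq h ▸ hv)
  obtain ⟨w, hvw, T, hT⟩ := Walk.not_nil_iff.mp hnil
  have hvT : v ∉ T.support := by
    have hpath := hW.reverse
    rw [hT, Walk.cons_isPath_iff] at hpath
    exact hpath.2
  refine ⟨w, hvw, T, fun u hu huS ↦ hvT (hWS u ?_ huS ▸ hu)⟩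
  rw [← List.mem_reverse, ← Walk.support_reverse, hT, Walk.support_cons]
  exact List.mem_cons_of_mem _ hu

lemma exists_isCycle_of_walks_compl (hS : (G.induce S).Preconnected) {va vb wa wb z : V}
    (hva : va ∈ S) (hvb : vb ∈ S) (hab : va ≠ vb) (ha : G.Adj va wa) (hb : G.Adj vb wb)
    (Ta : G.Walk wa z) (Tb : G.Walk wb z)
    (hTa : ∀ u ∈ Ta.support, u ∉ S) (hTb : ∀ u ∈ Tb.support, u ∉ S) :
    ∃ C : G.Walk va va, C.IsCycle ∧ s(va, wa) ∈ C.edges ∧ s(vb, wb) ∈ C.edges ∧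
      ∀ e ∈ C.edges, ∀ x ∈ e, ∀ y ∈ e, x ∈ S → y ∉ S → e = s(va, wa) ∨ e = s(vb, wb) := by
  classical
  set Q := (Ta.append Tb.reverse).bypass
  have hQ : ∀ u ∈ Q.support, u ∉ S := by
    intro u hu
    have hu' := Walk.support_bypass_subset_support _ hu
    rw [Walk.mem_support_append_iff, Walk.support_reverse, List.mem_reverse] at hu'
    exact hu'.elim (hTa u) (hTb u)
  obtain ⟨R, hR, hRS⟩ := hS.exists_isPath_of_induce hvb hva
  set D : G.Walk wa va := Q.append (.cons hb.symm R)
  have hDsupport : D.support = Q.support ++ R.support := by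
    simp only [D, Walk.support_append, Walk.support_cons, List.tail_cons]
  have hDedges : D.edges = Q.edges ++ s(wb, vb) :: R.edges := by
    simp only [D, Walk.edges_append, Walk.edges_cons]
  have hD : D.IsPath := by
    rw [Walk.isPath_def, hDsupport, List.nodup_append]
    exact ⟨(Walk.bypass_isPath _).support_nodup, hR.support_nodup,
      fun u hu u' hu' h ↦ hQ u hu (h ▸ hRS u' hu')⟩
  have hwa : wa ∉ S := hTa _ Ta.start_mem_support
  have hwb : wb ∉ S := hTb _ Tb.start_mem_support
  have hvawa : s(va, wa) ∉ D.edges := by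
    rw [hDedges, List.mem_append, List.mem_cons, Sym2.eq_iff]
    rintro (h | (⟨rfl, -⟩ | ⟨rfl, -⟩) | h)
    · exact hQ va (Q.fst_mem_support_of_mem_edges h) hva
    · exact hwb hva
    · exact hab rfl
    · exact hwa (hRS wa (R.snd_mem_support_of_mem_edges h))
  refine ⟨.cons ha D, (Walk.cons_isCycle_iff D ha).mpr ⟨hD, hvawa⟩, ?_, ?_, ?_⟩
  · simp
  · simp [hDedges, Sym2.eq_swap]
  · intro e he x hx y hy hxS hyS
    simp only [Walk.edges_cons, hDedges, List.mem_cons, List.mem_append] at he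
    rcases he with h | h | h | h
    · exact .inl h
    · exact absurd hxS (hQ x (Walk.mem_support_of_mem_edges h hx))
    · exact .inr (h.trans Sym2.eq_swap)
    · exact absurd (hRS y (Walk.mem_support_of_mem_edges h hy)) hyS

theorem IsCactus.ncard_attachments_le_two (hG : IsCactus G) (hS : (G.induce S).Preconnected)
    {z : V} (hz : z ∉ S) :
    {v ∈ S | ∃ W : G.Walk z v, W.IsPath ∧ ∀ u ∈ W.support, u ∈ S → u = v}.ncard ≤ 2 := by
  by_contra! hthree
  obtain ⟨v₁, ⟨hv₁, W₁, hW₁, hW₁S⟩, v₂, ⟨hv₂, W₂, hW₂, hW₂S⟩, v₃, ⟨hv₃, W₃, hW₃, hW₃S⟩,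
    h₁₂, h₁₃, h₂₃⟩ := (Set.two_lt_ncard (Set.finite_of_ncard_pos (by omega))).mp hthree
  obtain ⟨w₁, ha₁, T₁, hT₁⟩ := hW₁.exists_adj_walk_compl hz hv₁ hW₁S
  obtain ⟨w₂, ha₂, T₂, hT₂⟩ := hW₂.exists_adj_walk_compl hz hv₂ hW₂S
  obtain ⟨w₃, ha₃, T₃, hT₃⟩ := hW₃.exists_adj_walk_compl hz hv₃ hW₃S
  obtain ⟨C₁₂, hC₁₂, h₁C₁₂, h₂C₁₂, -⟩ :=
    exists_isCycle_of_walks_compl hS hv₁ hv₂ h₁₂ ha₁ ha₂ T₁ T₂ hT₁ hT₂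
  obtain ⟨C₁₃, hC₁₃, h₁C₁₃, -, hcross⟩ :=
    exists_isCycle_of_walks_compl hS hv₁ hv₃ h₁₃ ha₁ ha₃ T₁ T₃ hT₁ hT₃
  have h₂C₁₃ : s(v₂, w₂) ∈ C₁₃.edges :=
    (hG.2 _ _ _ _ hC₁₂ hC₁₃ _ h₁C₁₂ h₁C₁₃ _).mp h₂C₁₂
  rcases hcross _ h₂C₁₃ _ (Sym2.mem_mk_left _ _) _ (Sym2.mem_mk_right _ _) hv₂
    (hT₂ _ T₂.start_mem_support) with h | h
  · rcases Sym2.eq_iff.mp h with ⟨rfl, -⟩ | ⟨rfl, -⟩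
    exacts [h₁₂ rfl, hT₁ _ T₁.start_mem_support hv₂]
  · rcases Sym2.eq_iff.mp h with ⟨rfl, -⟩ | ⟨rfl, -⟩
    exacts [h₂₃ rfl, hT₃ _ T₃.start_mem_support hv₂]

end SimpleGraph

theorem cactus_attachment_vertices_general (G : SimpleGraph V)
    (hG : IsCactus G) (H : SpecialSubgraph G) (z : V) (hz : z ∉ H.verts) :
    {v ∈ H.verts | ∃ W : G.Walk z v, W.IsPath ∧
      ∀ u ∈ W.support, u ∈ H.verts → u = v}.ncard ≤ 2 :=
  hG.ncard_attachments_le_two H.connected_induce_verts.preconnected hz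

theorem cactus_attachment_vertices (G : SimpleGraph V) [Fintype V]
    (hG : IsCactus G) (H : SpecialSubgraph G) (z : V) (hz : z ∉ H.verts) :
    {v ∈ H.verts | ∃ W : G.Walk z v, W.IsPath ∧
      ∀ u ∈ W.support, u ∈ H.verts → u = v}.ncard ≤ 2 :=
  cactus_attachment_vertices_general G hG H z hz
end

section
/- Let G be a connected graph with radius r, center c, and suppose every isometric path of length r−1 starting at c shares a vertex other than c with a fixed isometric path P of length r starting at c. Then every vertex of G is within distance r−1 of the neighbor v₁ of c on P, contradicting rad(G) = r; hence some isometric path of length r−1 from c is internally disjoint from P. -/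
open SimpleGraph

variable {V : Type*}

lemma getVert_dist_le {G : SimpleGraph V} {u v : V} (w : G.Walk u v) (hG : G.Connected) :
    ∀ i j : ℕ, i ≤ j → G.dist (w.getVert i) (w.getVert j) ≤ j - i := by
  intro i j hij
  induction j with
  | zero => simp [Nat.le_zero.mp hij, SimpleGraph.dist_self]
  | succ k ih =>
    rcases Nat.lt_or_ge i (k+1) with h | h
    · have hik : i ≤ k := Nat.lt_succ_iff.mp h
      have h1 : G.dist (w.getVert k) (w.getVert (k+1)) ≤ 1 := by
        rcases Nat.lt_or_ge k w.length with hk | hk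
        · have := w.adj_getVert_succ hk
          exact le_of_eq (SimpleGraph.dist_eq_one_iff_adj.mpr this)
        · rw [w.getVert_of_length_le hk, w.getVert_of_length_le (le_trans hk (Nat.le_succ k))]
          simp [SimpleGraph.dist_self]
      calc G.dist (w.getVert i) (w.getVert (k+1))
          ≤ G.dist (w.getVert i) (w.getVert k) + G.dist (w.getVert k) (w.getVert (k+1)) :=
            hG.dist_triangle
        _ ≤ (k - i) + 1 := Nat.add_le_add (ih hik) h1
        _ = k + 1 - i := by omega
    · have : i = k + 1 := le_antisymm hij h
      simp [this, SimpleGraph.dist_self]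

/-- A shortest walk gives an isometric path. -/
lemma shortest_walk_isom {G : SimpleGraph V} (hG : G.Connected) {u v : V} (w : G.Walk u v)
    (hw : w.length = G.dist u v) : IsIsomPath G (fun i => w.getVert i) w.length := by
  have key : ∀ i j, i ≤ j → j ≤ w.length → G.dist (w.getVert i) (w.getVert j) = j - i := by
    intro i j hij hj
    refine le_antisymm (getVert_dist_le w hG i j hij) ?_
    have h1 : G.dist u (w.getVert i) ≤ i - 0 := by
      simpa using getVert_dist_le w hG 0 i (Nat.zero_le i)
    have h2 : G.dist (w.getVert j) v ≤ w.length - j := by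
      have := getVert_dist_le w hG j w.length hj
      rwa [w.getVert_length] at this
    have h3 : G.dist u v ≤ G.dist u (w.getVert i) + G.dist (w.getVert i) (w.getVert j)
        + G.dist (w.getVert j) v := by
      calc G.dist u v ≤ G.dist u (w.getVert j) + G.dist (w.getVert j) v := hG.dist_triangle
        _ ≤ (G.dist u (w.getVert i) + G.dist (w.getVert i) (w.getVert j)) + G.dist (w.getVert j) v :=
            Nat.add_le_add_right hG.dist_triangle _
    have hL : G.dist u v = w.length := hw.symm
    omega
  intro i j hi hj
  rcases Nat.le_total i j with h | h
  · rw [key i j h hj]; omega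
  · rw [SimpleGraph.dist_comm, key j i h hi]; omega

lemma isom_mono {G : SimpleGraph V} {p : ℕ → V} {k k' : ℕ} (h : IsIsomPath G p k)
    (hk : k' ≤ k) : IsIsomPath G p k' :=
  fun i j hi hj => h i j (le_trans hi hk) (le_trans hj hk)

theorem exists_internally_disjoint_radial_path (G : SimpleGraph V) [Fintype V]
    (hG : G.Connected) (r : ℕ) (hr : 1 ≤ r) (hrad : grad G = r) (c : V)
    (hc : ecc G c = r) (p : ℕ → V) (hp : IsIsomPath G p r) (hp0 : p 0 = c) :
    ((∀ q : ℕ → V, IsIsomPath G q (r - 1) → q 0 = c →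
        ∃ i j, 1 ≤ i ∧ i ≤ r - 1 ∧ 1 ≤ j ∧ j ≤ r ∧ q i = p j) → False) ∧
    ∃ q : ℕ → V, IsIsomPath G q (r - 1) ∧ q 0 = c ∧
      pathVerts p r ∩ pathVerts q (r - 1) = {c} := by
  have dist_le_ecc : ∀ u : V, G.dist c u ≤ r := by
    intro u
    rw [← hc]
    exact Finset.le_sup (Finset.mem_univ u)
  have key : (∀ q : ℕ → V, IsIsomPath G q (r - 1) → q 0 = c →
        ∃ i j, 1 ≤ i ∧ i ≤ r - 1 ∧ 1 ≤ j ∧ j ≤ r ∧ q i = p j) → False := by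
    intro H
    -- every vertex within r-1 of p 1
    have hmain : ∀ u : V, G.dist (p 1) u ≤ r - 1 := by
      intro u
      set d := G.dist c u with hd
      have hdr : d ≤ r := dist_le_ecc u
      have hcp1 : G.dist c (p 1) = 1 := by
        have := hp 0 1 (Nat.zero_le r) hr
        simpa [hp0] using this
      rcases Nat.lt_or_ge d (r - 1) with hcase | hcase
      · -- d ≤ r - 2 : easy triangle
        calc G.dist (p 1) u ≤ G.dist (p 1) c + G.dist c u := hG.dist_triangle
          _ = 1 + d := by rw [SimpleGraph.dist_comm, hcp1]
          _ ≤ r - 1 := by omega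
      · -- d = r-1 or r : use shortest walk
        obtain ⟨w, hw⟩ := hG.exists_walk_length_eq_dist c u
        have hisom : IsIsomPath G (fun i => w.getVert i) w.length :=
          shortest_walk_isom hG w hw
        have hwl : w.length = d := hw
        have hq : IsIsomPath G (fun i => w.getVert i) (r - 1) :=
          isom_mono hisom (by omega)
        have hq0 : w.getVert 0 = c := w.getVert_zero
        obtain ⟨i, j, hi1, hi2, hj1, hj2, hij⟩ := H _ hq hq0
        -- i = j
        have hdi : G.dist c (w.getVert i) = i := by
          have := hq 0 i (Nat.zero_le _) hi2
          simpa using this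
        have hdj : G.dist c (p j) = j := by
          have := hp 0 j (Nat.zero_le r) hj2
          simpa [hp0] using this
        have hij' : i = j := by rw [← hdi, hij, hdj]
        have hple : G.dist (p 1) (p j) = j - 1 := by
          have := hp 1 j hr hj2
          omega
        have hqu : G.dist (w.getVert i) u = d - i := by
          have h5 := hisom i w.length (by omega) le_rfl
          simp only [w.getVert_length] at h5
          omega
        calc G.dist (p 1) u ≤ G.dist (p 1) (p j) + G.dist (p j) u := hG.dist_triangle
          _ = (j - 1) + (d - i) := by rw [hple, ← hij, hqu]
          _ ≤ r - 1 := by omega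
    have hecc : ecc G (p 1) ≤ r - 1 := by
      apply Finset.sup_le
      intro u _
      exact hmain u
    have hge : r ≤ ecc G (p 1) := by
      rw [← hrad]
      exact Nat.sInf_le ⟨p 1, rfl⟩
    omega
  refine ⟨key, ?_⟩
  have key2 : ¬ (∀ q : ℕ → V, IsIsomPath G q (r - 1) → q 0 = c →
        ∃ i j, 1 ≤ i ∧ i ≤ r - 1 ∧ 1 ≤ j ∧ j ≤ r ∧ q i = p j) := key
  push_neg at key2
  obtain ⟨q, hq, hq0, hdisj⟩ := key2
  refine ⟨q, hq, hq0, ?_⟩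
  ext x
  simp only [Set.mem_inter_iff, Set.mem_singleton_iff, pathVerts, Set.mem_setOf_eq]
  constructor
  · rintro ⟨⟨j, hj, rfl⟩, ⟨i, hi, hqi⟩⟩
    rcases Nat.eq_zero_or_pos i with rfl | hipos
    · rw [← hqi, hq0]
    rcases Nat.eq_zero_or_pos j with rfl | hjpos
    · exact hp0
    exfalso
    exact (hdisj i j hipos hi hjpos hj) hqi
  · rintro rfl
    exact ⟨⟨0, Nat.zero_le r, hp0⟩, ⟨0, Nat.zero_le _, hq0⟩⟩
end
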